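/- Let I ⊂ (0,∞) be an open interval and let w : I → ℝ be a differentiable solution of w'(r) = (2w(r)³ + 2w(r) − √3(1 + w(r)²)^{3/2})/r with w(r) > √3 for all r ∈ I. Then there exists a constant C > 0 such that 2w(r)/(1 + w(r)²)^{1/2} − √3 = C²·r² for all r ∈ I. -/

import Mathlib

/-!
With `φ(x) = 2x/√(1+x²) − √3` one has `φ'(x) = 2/(1+x²)^{3/2}`, and since `2w³ + 2w = 2w(1+w²)`
the equation becomes `(φ ∘ w)'(r) = 2 φ(w(r))/r`. Hence `φ(w(r))/r²` is constant on the interval,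
and the constant is positive because `φ(x) > 0` for `x > √3`.
-/

open Real Set

theorem IsOpen.exists_eq_mul_pow_of_hasDerivAt {s : Set ℝ} (hs : IsOpen s)
    (hs' : IsPreconnected s) (hs0 : ∀ r ∈ s, r ≠ 0) {f : ℝ → ℝ} (n : ℕ)
    (hf : ∀ r ∈ s, HasDerivAt f (n * f r / r) r) : ∃ c, ∀ r ∈ s, f r = c * r ^ n := by
  have hquot : ∀ r ∈ s, HasDerivAt (fun r => f r / r ^ n) 0 r := by
    intro r hr
    refine ((hf r hr).fun_div (hasDerivAt_pow n r) (pow_ne_zero n (hs0 r hr))).congr_deriv ?_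
    rcases n with _ | n
    · simp
    · rw [Nat.add_sub_cancel, pow_succ]
      field_simp [hs0 r hr]
      ring
  obtain ⟨c, hc⟩ := hs.exists_is_const_of_deriv_eq_zero hs'
    (fun r hr => (hquot r hr).differentiableAt.differentiableWithinAt)
    (fun r hr => (hquot r hr).deriv)
  refine ⟨c, fun r hr => ?_⟩
  rw [← hc r hr, div_mul_cancel₀ _ (pow_ne_zero n (hs0 r hr))]

theorem hasDerivAt_div_sqrt_one_add_sq (x : ℝ) :
    HasDerivAt (fun x => x / √(1 + x ^ 2)) (1 / √(1 + x ^ 2) ^ 3) x := by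
  have hpos : 0 < 1 + x ^ 2 := by positivity
  have hs : 0 < √(1 + x ^ 2) := sqrt_pos.2 hpos
  have hsqrt : HasDerivAt (fun x => √(1 + x ^ 2)) (x / √(1 + x ^ 2)) x := by
    refine (((hasDerivAt_pow 2 x).const_add 1).sqrt hpos.ne').congr_deriv ?_
    field_simp
    ring
  refine ((hasDerivAt_id' x).fun_div hsqrt hs.ne').congr_deriv ?_
  field_simp
  rw [sq_sqrt hpos.le]
  simp

noncomputable def firstIntegral (x : ℝ) : ℝ := 2 * x / √(1 + x ^ 2) - √3

theorem firstIntegral_pos {x : ℝ} (hx : √3 < x) : 0 < firstIntegral x := by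
  have hs : 0 < √(1 + x ^ 2) := sqrt_pos.2 (by positivity)
  have h3 : √3 ^ 2 = 3 := sq_sqrt (by norm_num)
  have hsq : √(1 + x ^ 2) ^ 2 = 1 + x ^ 2 := sq_sqrt (by positivity)
  have : √3 * √(1 + x ^ 2) < 2 * x := by
    nlinarith [sqrt_nonneg 3, mul_pos (sqrt_nonneg 3 |>.trans_lt hx) hs]
  rw [firstIntegral, sub_pos, lt_div_iff₀ hs]
  linarith

theorem hasDerivAt_firstIntegral_comp {w : ℝ → ℝ} {r : ℝ}
    (hw : HasDerivAt w ((2 * w r ^ 3 + 2 * w r - √3 * √(1 + w r ^ 2) ^ 3) / r) r) :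
    HasDerivAt (fun r => firstIntegral (w r)) (2 * firstIntegral (w r) / r) r := by
  have hsq : √(1 + w r ^ 2) ^ 2 = 1 + w r ^ 2 := sq_sqrt (by positivity)
  have hφ : HasDerivAt firstIntegral (2 * (1 / √(1 + w r ^ 2) ^ 3)) (w r) := by
    unfold firstIntegral
    simp only [mul_div_assoc]
    exact ((hasDerivAt_div_sqrt_one_add_sq (w r)).const_mul 2).sub_const _
  refine (hφ.comp r hw).congr_deriv ?_
  rw [← mul_div_assoc, firstIntegral]
  congr 1
  field_simp
  linear_combination (-2 * w r) * hsq

theorem stmt_8 (a b : ℝ) (I : Set ℝ) (hI : I = Set.Ioo a b) (hIpos : I ⊆ Set.Ioi 0)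
    (w : ℝ → ℝ)
    (hw : ∀ r ∈ I, HasDerivAt w
      ((2 * (w r) ^ 3 + 2 * w r - Real.sqrt 3 * (Real.sqrt (1 + (w r) ^ 2)) ^ 3) / r) r)
    (hgt : ∀ r ∈ I, Real.sqrt 3 < w r) :
    ∃ C : ℝ, 0 < C ∧ ∀ r ∈ I,
      2 * w r / Real.sqrt (1 + (w r) ^ 2) - Real.sqrt 3 = C ^ 2 * r ^ 2 := by
  subst hI
  rcases (Ioo a b).eq_empty_or_nonempty with hempty | ⟨r₀, hr₀⟩
  · exact ⟨1, one_pos, by simp [hempty]⟩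
  have hr_ne : ∀ r ∈ Ioo a b, r ≠ 0 := fun r hr => (hIpos hr).ne'
  obtain ⟨c, hc⟩ := isOpen_Ioo.exists_eq_mul_pow_of_hasDerivAt isPreconnected_Ioo hr_ne 2
    fun r hr => by exact_mod_cast hasDerivAt_firstIntegral_comp (hw r hr)
  have hc_pos : 0 < c := by
    have h := firstIntegral_pos (hgt r₀ hr₀)
    rw [hc r₀ hr₀] at h
    exact pos_of_mul_pos_left h (sq_nonneg r₀)
  exact ⟨√c, sqrt_pos.2 hc_pos, fun r hr => by rw [sq_sqrt hc_pos.le]; exact hc r hr⟩
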